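/- arXiv:2207.14217 — 5 statements merged into one kernel-verified Lean document; each statement's English description precedes it below -/
import Mathlib

section
/- Let n ≥ 1 be an integer, D ⊆ ℝⁿ open, and η : D → ℝ continuous with 0 < η(x) ≤ H for all x ∈ D, for some constant H. Fix real constants s ≥ 0, κ with 2κ ≥ n − 2 and 2κ + 2 − s > 0, and λ, p, f⋆ > 0. Set f(ρ,x) := ρ/η(x), Ω := {(ρ,x) ∈ (0,∞) × D : f(ρ,x) < f⋆}, and for ρ⁎ > 0 let D_{ρ⁎} := {x ∈ D : ρ⁎ < f⋆ η(x)}. Let Ψ : (0,∞) × D → ℝ^d be continuous and continuously differentiable in ρ. Then, as an inequality in [0,∞] with all integrals taken with respect to Lebesgue measure: (2κ+2−s) · λ · ∫_Ω e^{−λ f^p/p} f^{n−2−2κ} ρ^{s−n−1} |Ψ|² ≤ ∫_Ω e^{−λ f^p/p} f^{n−2−p−2κ} ρ^{s−n+1} |∂_ρ Ψ|² + λ · H^{2κ+2−n} · limsup_{ρ⁎→0⁺} ∫_{D_{ρ⁎}} ρ⁎^{s−2κ−2} |Ψ(ρ⁎, x)|² dx. -/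
/-!
Fix `x`, write `f = ρ / η(x)` and `V = e^{-λ f^p/p} f^α ρ^β`, so that `ρ V' = (α + β - λ f^p) V`.
With `c = -(α + β)`, the ρ-derivative of `λ V |Ψ|²` is
`-(c + λ f^p) λ (V/ρ) |Ψ|² + 2 λ V ⟨Ψ, ∂_ρ Ψ⟩`, and Young's inequality
`2 λ ρ ⟨Ψ, ∂_ρ Ψ⟩ ≤ λ² f^p |Ψ|² + ρ² f^{-p} |∂_ρ Ψ|²` absorbs the cross term:
`c λ (V/ρ) |Ψ|² + ∂_ρ (λ V |Ψ|²) ≤ (ρ V / f^p) |∂_ρ Ψ|²`.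
Integrating over `ρ ∈ (a, f⋆ η(x))`, the boundary term at the outer end is nonnegative and the one
at `ρ = a` is at most `λ H^{-α} a^{α+β} |Ψ(a, x)|²`, because the exponential factor is `≤ 1` and
`η ≤ H`. Tonelli in `x` and monotone convergence as `a → 0⁺` give the estimate, with
`α = n - 2 - 2κ` and `β = s - n`.
-/

open Set MeasureTheory Filter
open scoped ENNReal RealInnerProductSpace Topology

theorem two_mul_inner_le_mul_norm_sq_add_div {E : Type*} [NormedAddCommGroup E]
    [InnerProductSpace ℝ E] {K : ℝ} (hK : 0 < K) (v w : E) :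
    2 * ⟪v, w⟫ ≤ K * ‖v‖ ^ 2 + ‖w‖ ^ 2 / K := by
  have hsq : K * ‖v‖ ^ 2 + ‖w‖ ^ 2 / K - 2 * ⟪v, w⟫ = ‖K • v - w‖ ^ 2 / K := by
    rw [norm_sub_sq_real, norm_smul, real_inner_smul_left, Real.norm_of_nonneg hK.le]
    field_simp
    ring
  have : 0 ≤ ‖K • v - w‖ ^ 2 / K := by positivity
  linarith

theorem intervalIntegral_le_add_of_hasDerivAt {F g h G : ℝ → ℝ} {a b : ℝ} (hab : a ≤ b)
    (hG : ∀ t ∈ Icc a b, HasDerivAt G (g t) t) (hF : IntervalIntegrable F volume a b)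
    (hg : IntervalIntegrable g volume a b) (hh : IntervalIntegrable h volume a b)
    (hle : ∀ t ∈ Icc a b, F t + g t ≤ h t) (hGb : 0 ≤ G b) :
    ∫ t in a..b, F t ≤ (∫ t in a..b, h t) + G a := by
  have hftc := intervalIntegral.integral_eq_sub_of_hasDerivAt
    (fun t ht => hG t (uIcc_of_le hab ▸ ht)) hg
  have hmono := intervalIntegral.integral_mono_on hab (hF.add hg) hh hle
  rw [intervalIntegral.integral_add hF hg, hftc] at hmono
  linarith

theorem lintegral_Ioo_ofReal_eq_ofReal_intervalIntegral {F : ℝ → ℝ} {a b : ℝ} (hab : a ≤ b)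
    (hF : ContinuousOn F (Icc a b)) (hF0 : ∀ t ∈ Ioo a b, 0 ≤ F t) :
    ∫⁻ t in Ioo a b, ENNReal.ofReal (F t) = ENNReal.ofReal (∫ t in a..b, F t) := by
  rw [intervalIntegral.integral_of_le hab, integral_Ioc_eq_integral_Ioo,
    ofReal_integral_eq_lintegral_ofReal (hF.integrableOn_Icc.mono_set Ioo_subset_Icc_self)
      ((ae_restrict_iff' measurableSet_Ioo).2 (ae_of_all _ hF0))]

theorem setLIntegral_prod_eq_lintegral_slices {α β : Type*} [MeasurableSpace α]
    [MeasurableSpace β] {μ : Measure α} {ν : Measure β} [SFinite μ] [SFinite ν]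
    {S : Set (α × β)} (hS : MeasurableSet S) {f : α × β → ℝ≥0∞}
    (hf : AEMeasurable f ((μ.prod ν).restrict S)) :
    ∫⁻ z in S, f z ∂μ.prod ν = ∫⁻ y, ∫⁻ x in {x | (x, y) ∈ S}, f (x, y) ∂μ ∂ν := by
  rw [← lintegral_indicator hS, lintegral_prod_symm _ ((aemeasurable_indicator_iff hS).2 hf)]
  refine lintegral_congr fun y => ?_
  exact lintegral_indicator (measurable_prodMk_right hS) fun x => f (x, y)

theorem aemeasurable_deriv_restrict_Ioi_prod {X E : Type*} [TopologicalSpace X]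
    [MeasurableSpace X] [OpensMeasurableSpace X] [NormedAddCommGroup E] [NormedSpace ℝ E]
    [MeasurableSpace E] [BorelSpace E] {μ : Measure (ℝ × X)} {c : ℝ} {D : Set X}
    (hD : MeasurableSet D) {F : ℝ × X → E} (hF : ContinuousOn F (Ioi c ×ˢ D))
    (hdiff : ∀ z ∈ Ioi c ×ˢ D, DifferentiableAt ℝ (fun t => F (t, z.2)) z.1) :
    AEMeasurable (fun z => deriv (fun t => F (t, z.2)) z.1) (μ.restrict (Ioi c ×ˢ D)) := by
  -- forward difference quotients stay inside `Ioi c ×ˢ D`, where they are continuous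
  set h : ℕ → ℝ := fun k => ((k : ℝ) + 1)⁻¹
  have hh : Tendsto h atTop (𝓝[>] 0) := tendsto_inv_atTop_nhdsGT_zero.comp
    (tendsto_atTop_add_const_right _ 1 tendsto_natCast_atTop_atTop)
  have hquot : ∀ k, ContinuousOn (fun z => (h k)⁻¹ • (F (z.1 + h k, z.2) - F z))
      (Ioi c ×ˢ D) := fun k =>
    ((hF.comp (by fun_prop) fun z hz =>
      ⟨lt_add_of_lt_of_pos (mem_Ioi.1 hz.1) (by positivity : (0 : ℝ) < h k), hz.2⟩).sub
        hF).const_smul _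
  refine aemeasurable_of_tendsto_metrizable_ae' (fun k => (hquot k).aemeasurable
    (measurableSet_Ioi.prod hD)) ((ae_restrict_iff' (measurableSet_Ioi.prod hD)).2
      (ae_of_all _ fun z hz => ?_))
  exact (hdiff z hz).hasDerivAt.tendsto_slope_zero_right.comp hh

noncomputable def carlemanWeight (lam p e α β t : ℝ) : ℝ :=
  Real.exp (-(lam * (t / e) ^ p / p)) * (t / e) ^ α * t ^ β

section CarlemanWeight

variable {lam p e α β t : ℝ}

theorem carlemanWeight_nonneg (he : 0 < e) (ht : 0 < t) : 0 ≤ carlemanWeight lam p e α β t := by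
  have := div_pos ht he
  unfold carlemanWeight
  positivity

theorem carlemanWeight_eq_mul_sub_one (ht : 0 < t) :
    carlemanWeight lam p e α β t = t * carlemanWeight lam p e α (β - 1) t := by
  simp only [carlemanWeight, Real.rpow_sub_one ht.ne']
  field_simp

theorem carlemanWeight_sub_add_one (he : 0 < e) (ht : 0 < t) :
    carlemanWeight lam p e (α - p) (β + 1) t =
      t ^ 2 / (t / e) ^ p * carlemanWeight lam p e α (β - 1) t := by
  simp only [carlemanWeight, Real.rpow_sub (div_pos ht he), Real.rpow_add_one ht.ne',
    Real.rpow_sub_one ht.ne']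
  field_simp

theorem hasDerivAt_carlemanWeight (hp : p ≠ 0) (he : 0 < e) (ht : 0 < t) :
    HasDerivAt (carlemanWeight lam p e α β)
      ((α + β - lam * (t / e) ^ p) * carlemanWeight lam p e α (β - 1) t) t := by
  have hf : 0 < t / e := div_pos ht he
  have hquot : HasDerivAt (fun u => u / e) (1 / e) t := (hasDerivAt_id t).div_const e
  have hexp := (((hquot.rpow_const (p := p) (Or.inl hf.ne')).const_mul lam).div_const p).neg.exp
  have hpow := hquot.rpow_const (p := α) (Or.inl hf.ne')
  have hT := Real.hasDerivAt_rpow_const (x := t) (p := β) (Or.inl ht.ne')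
  refine ((hexp.mul hpow).mul hT).congr_deriv ?_
  simp only [carlemanWeight, Pi.mul_apply, Pi.neg_apply, Real.rpow_sub_one hf.ne',
    Real.rpow_sub_one ht.ne']
  field_simp
  ring

theorem carlemanWeight_le_rpow {H : ℝ} (hlam : 0 ≤ lam) (hp : 0 < p) (hα : α ≤ 0)
    (he : 0 < e) (heH : e ≤ H) (ht : 0 < t) :
    carlemanWeight lam p e α β t ≤ H ^ (-α) * t ^ (α + β) := by
  have hexp : Real.exp (-(lam * (t / e) ^ p / p)) ≤ 1 := by
    rw [Real.exp_le_one_iff, neg_nonpos]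
    have := div_pos ht he
    positivity
  have heH' : e ^ (-α) ≤ H ^ (-α) := Real.rpow_le_rpow he.le heH (neg_nonneg.2 hα)
  calc carlemanWeight lam p e α β t
      = Real.exp (-(lam * (t / e) ^ p / p)) * (e ^ (-α) * t ^ (α + β)) := by
        rw [carlemanWeight, Real.div_rpow ht.le he.le α, Real.rpow_neg he.le, Real.rpow_add ht]
        ring
    _ ≤ 1 * (H ^ (-α) * t ^ (α + β)) := by gcongr
    _ = H ^ (-α) * t ^ (α + β) := one_mul _

end CarlemanWeight

theorem ContinuousOn.carlemanWeight {Y : Type*} [TopologicalSpace Y] {s : Set Y}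
    {e t : Y → ℝ} (lam p α β : ℝ) (he : ContinuousOn e s) (ht : ContinuousOn t s)
    (he0 : ∀ y ∈ s, 0 < e y) (ht0 : ∀ y ∈ s, 0 < t y) :
    ContinuousOn (fun y => carlemanWeight lam p (e y) α β (t y)) s := by
  have hf : ContinuousOn (fun y => t y / e y) s := ht.div he fun y hy => (he0 y hy).ne'
  have hf0 : ∀ y ∈ s, t y / e y ≠ 0 := fun y hy => (div_pos (ht0 y hy) (he0 y hy)).ne'
  unfold _root_.carlemanWeight
  exact ((Real.continuous_exp.comp_continuousOn (((continuousOn_const.mul (hf.rpow_const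
    fun y hy => Or.inl (hf0 y hy))).div_const p).neg)).mul (hf.rpow_const fun y hy =>
      Or.inl (hf0 y hy))).mul (ht.rpow_const fun y hy => Or.inl (ht0 y hy).ne')

section Transport

variable {E : Type*} [NormedAddCommGroup E] [InnerProductSpace ℝ E] {lam p e α β t : ℝ}

theorem carlemanWeight_transport_le (he : 0 < e) (ht : 0 < t) (v v' : E) :
    -(α + β) * lam * (carlemanWeight lam p e α (β - 1) t * ‖v‖ ^ 2) +
        lam * ((α + β - lam * (t / e) ^ p) * carlemanWeight lam p e α (β - 1) t * ‖v‖ ^ 2 +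
          carlemanWeight lam p e α β t * (2 * ⟪v, v'⟫)) ≤
      carlemanWeight lam p e (α - p) (β + 1) t * ‖v'‖ ^ 2 := by
  have hf : 0 < (t / e) ^ p := Real.rpow_pos_of_pos (div_pos ht he) p
  have hW := carlemanWeight_nonneg (lam := lam) (p := p) (α := α) (β := β - 1) he ht
  have young := two_mul_inner_le_mul_norm_sq_add_div hf (lam • v) (t • v')
  rw [real_inner_smul_left, real_inner_smul_right, norm_smul, norm_smul, Real.norm_eq_abs,
    Real.norm_eq_abs, mul_pow, mul_pow, sq_abs, sq_abs] at young
  rw [carlemanWeight_eq_mul_sub_one (β := β) ht, carlemanWeight_sub_add_one he ht]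
  have := mul_le_mul_of_nonneg_left young hW
  linear_combination this

theorem carleman_transport_Ioo {ψ ψ' : ℝ → E} {a b : ℝ} (hp : p ≠ 0) (he : 0 < e)
    (ha : 0 < a) (hab : a ≤ b) (hlam : 0 ≤ lam) (hαβ : α + β ≤ 0)
    (hψ : ∀ t ∈ Icc a b, HasDerivAt ψ (ψ' t) t) (hψ' : ContinuousOn ψ' (Icc a b)) :
    ENNReal.ofReal (-(α + β) * lam) *
        ∫⁻ t in Ioo a b, ENNReal.ofReal (carlemanWeight lam p e α (β - 1) t * ‖ψ t‖ ^ 2) ≤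
      (∫⁻ t in Ioo a b, ENNReal.ofReal (carlemanWeight lam p e (α - p) (β + 1) t * ‖ψ' t‖ ^ 2)) +
        ENNReal.ofReal (lam * (carlemanWeight lam p e α β a * ‖ψ a‖ ^ 2)) := by
  have hpos : ∀ t ∈ Icc a b, 0 < t := fun t ht => ha.trans_le ht.1
  have hψc : ContinuousOn ψ (Icc a b) := fun t ht => (hψ t ht).continuousAt.continuousWithinAt
  have hw : ∀ α β, ContinuousOn (carlemanWeight lam p e α β) (Icc a b) := fun α β =>
    continuousOn_const.carlemanWeight lam p α β continuousOn_id (fun _ _ => he) hpos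
  have hW := hw α (β - 1)
  have hV := hw α β
  have hU := hw (α - p) (β + 1)
  have hf : ContinuousOn (fun t => (t / e) ^ p) (Icc a b) :=
    (continuousOn_id.div_const e).rpow_const fun t ht => Or.inl (div_pos (hpos t ht) he).ne'
  have hinner : ContinuousOn (fun t => ⟪ψ t, ψ' t⟫) (Icc a b) := hψc.inner hψ'
  have hL : ContinuousOn (fun t => carlemanWeight lam p e α (β - 1) t * ‖ψ t‖ ^ 2) (Icc a b) := by
    fun_prop
  have hR : ContinuousOn (fun t => carlemanWeight lam p e (α - p) (β + 1) t * ‖ψ' t‖ ^ 2)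
      (Icc a b) := by
    fun_prop
  have hg : ContinuousOn (fun t => lam * ((α + β - lam * (t / e) ^ p) *
      carlemanWeight lam p e α (β - 1) t * ‖ψ t‖ ^ 2 +
        carlemanWeight lam p e α β t * (2 * ⟪ψ t, ψ' t⟫))) (Icc a b) := by
    fun_prop
  have hreal := intervalIntegral_le_add_of_hasDerivAt hab
    (G := fun t => lam * (carlemanWeight lam p e α β t * ‖ψ t‖ ^ 2))
    (fun t ht =>
      ((hasDerivAt_carlemanWeight hp he (hpos t ht)).mul (hψ t ht).norm_sq).const_mul lam)
    ((hL.const_mul (-(α + β) * lam)).intervalIntegrable_of_Icc hab)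
    (hg.intervalIntegrable_of_Icc hab) (hR.intervalIntegrable_of_Icc hab)
    (fun t ht => carlemanWeight_transport_le he (hpos t ht) (ψ t) (ψ' t))
    (mul_nonneg hlam (mul_nonneg (carlemanWeight_nonneg he (hpos b (right_mem_Icc.2 hab)))
      (sq_nonneg _)))
  rw [intervalIntegral.integral_const_mul] at hreal
  have hnonneg : ∀ γ δ (u : ℝ → E), ∀ t ∈ Ioo a b,
      0 ≤ carlemanWeight lam p e γ δ t * ‖u t‖ ^ 2 := fun _ _ _ t ht =>
    mul_nonneg (carlemanWeight_nonneg he (ha.trans ht.1)) (sq_nonneg _)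
  rw [lintegral_Ioo_ofReal_eq_ofReal_intervalIntegral hab hL (hnonneg _ _ ψ),
    lintegral_Ioo_ofReal_eq_ofReal_intervalIntegral hab hR (hnonneg _ _ ψ'),
    ← ENNReal.ofReal_mul (mul_nonneg (neg_nonneg.2 hαβ) hlam)]
  exact (ENNReal.ofReal_le_ofReal hreal).trans ENNReal.ofReal_add_le

theorem carleman_transport_Ioo_rpow_bound {ψ : ℝ → E} {a b H : ℝ} (hp : 0 < p) (he : 0 < e)
    (heH : e ≤ H) (ha : 0 < a) (hab : a ≤ b) (hlam : 0 ≤ lam) (hα : α ≤ 0) (hαβ : α + β ≤ 0)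
    (hψ : ∀ t ∈ Ioi 0, HasDerivAt ψ (deriv ψ t) t) (hψ' : ContinuousOn (deriv ψ) (Ioi 0)) :
    ENNReal.ofReal (-(α + β) * lam) *
        ∫⁻ t in Ioo a b, ENNReal.ofReal (carlemanWeight lam p e α (β - 1) t * ‖ψ t‖ ^ 2) ≤
      (∫⁻ t in Ioo 0 b,
          ENNReal.ofReal (carlemanWeight lam p e (α - p) (β + 1) t * ‖deriv ψ t‖ ^ 2)) +
        ENNReal.ofReal lam * ENNReal.ofReal (H ^ (-α)) *
          ENNReal.ofReal (a ^ (α + β) * ‖ψ a‖ ^ 2) := by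
  have hIcc : Icc a b ⊆ Ioi 0 := fun t ht => ha.trans_le ht.1
  refine (carleman_transport_Ioo hp.ne' he ha hab hlam hαβ (fun t ht => hψ t (hIcc ht))
    (hψ'.mono hIcc)).trans (add_le_add (lintegral_mono_set (Ioo_subset_Ioo_left ha.le)) ?_)
  have hH : 0 ≤ H ^ (-α) := Real.rpow_nonneg (he.le.trans heH) _
  rw [← ENNReal.ofReal_mul hlam, ← ENNReal.ofReal_mul (mul_nonneg hlam hH)]
  refine ENNReal.ofReal_le_ofReal ?_
  calc lam * (carlemanWeight lam p e α β a * ‖ψ a‖ ^ 2)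
      ≤ lam * (H ^ (-α) * a ^ (α + β) * ‖ψ a‖ ^ 2) := by
        gcongr
        exact carlemanWeight_le_rpow hlam hp hα he heH ha
    _ = lam * H ^ (-α) * (a ^ (α + β) * ‖ψ a‖ ^ 2) := by ring

end Transport

section Region

variable {X : Type*} {D : Set X} {η : X → ℝ} {fstar : ℝ}

def carlemanRegion (D : Set X) (η : X → ℝ) (fstar a : ℝ) : Set (ℝ × X) :=
  {z | z.2 ∈ D ∧ a < z.1 ∧ z.1 / η z.2 < fstar}

theorem carlemanRegion_antitone : Antitone (carlemanRegion D η fstar) :=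
  fun _ _ hab _ hz => ⟨hz.1, hab.trans_lt hz.2.1, hz.2.2⟩

theorem carlemanRegion_subset_Ioi_prod {a : ℝ} (ha : 0 ≤ a) :
    carlemanRegion D η fstar a ⊆ Ioi 0 ×ˢ D :=
  fun _ hz => ⟨ha.trans_lt hz.2.1, hz.1⟩

theorem iUnion_carlemanRegion :
    ⋃ m : ℕ, carlemanRegion D η fstar (1 / (m + 1)) = carlemanRegion D η fstar 0 := by
  refine Subset.antisymm (iUnion_subset fun m => carlemanRegion_antitone (by positivity)) ?_
  rintro z ⟨hD, hpos, hf⟩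
  obtain ⟨m, hm⟩ := exists_nat_one_div_lt hpos
  exact mem_iUnion.2 ⟨m, hD, hm, hf⟩

theorem setOf_mem_carlemanRegion {a : ℝ} {x : X} (hx : x ∈ D) (hηx : 0 < η x) :
    {ρ | (ρ, x) ∈ carlemanRegion D η fstar a} = Ioo a (fstar * η x) := by
  ext ρ
  simp [carlemanRegion, hx, div_lt_iff₀ hηx]

theorem setOf_mem_carlemanRegion_of_notMem {a : ℝ} {x : X} (hx : x ∉ D) :
    {ρ | (ρ, x) ∈ carlemanRegion D η fstar a} = ∅ :=
  eq_empty_of_forall_notMem fun _ hρ => hx hρ.1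

theorem IsOpen.carlemanRegion [TopologicalSpace X] (hD : IsOpen D) (hη : ContinuousOn η D)
    (hη0 : ∀ x ∈ D, η x ≠ 0) (a : ℝ) : IsOpen (carlemanRegion D η fstar a) := by
  have hf : ContinuousOn (fun z : ℝ × X => z.1 / η z.2) (Ioi a ×ˢ D) :=
    continuousOn_fst.div (hη.comp continuousOn_snd fun _ hz => hz.2) fun z hz => hη0 _ hz.2
  convert hf.isOpen_inter_preimage (isOpen_Ioi.prod hD) isOpen_Iio using 1
  ext z
  simp only [_root_.carlemanRegion, mem_ofPred_eq, mem_inter_iff, mem_prod, mem_Ioi, mem_preimage,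
    mem_Iio]
  tauto

theorem mul_setLIntegral_carlemanRegion_le_limsup [MeasurableSpace X] {ν : Measure (ℝ × X)}
    {f : ℝ × X → ℝ≥0∞} {c : ℝ≥0∞} {u : ℝ → ℝ≥0∞}
    (h : ∀ a > 0, c * ∫⁻ z in carlemanRegion D η fstar a, f z ∂ν ≤ u a) :
    c * ∫⁻ z in carlemanRegion D η fstar 0, f z ∂ν ≤ limsup u (𝓝[>] 0) := by
  have hmono : Monotone fun m : ℕ => carlemanRegion D η fstar (1 / (m + 1)) :=
    fun _ _ hmn => carlemanRegion_antitone (Nat.one_div_le_one_div hmn)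
  rw [← iUnion_carlemanRegion, setLIntegral_iUnion_of_directed _ hmono.directed_le,
    ENNReal.mul_iSup]
  refine iSup_le fun m => le_limsup_of_frequently_le' (Eventually.frequently ?_)
  filter_upwards [Ioo_mem_nhdsGT (by positivity : (0 : ℝ) < 1 / (m + 1))] with a ha
  calc c * ∫⁻ z in carlemanRegion D η fstar (1 / (m + 1)), f z ∂ν
      ≤ c * ∫⁻ z in carlemanRegion D η fstar a, f z ∂ν := by
        gcongr
        exact carlemanRegion_antitone ha.2.le
    _ ≤ u a := h a ha.1

theorem carleman_transport_slice {E : Type*} [NormedAddCommGroup E] [InnerProductSpace ℝ E]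
    {Ψ : ℝ × X → E} {H lam p α β a : ℝ} (hη : ∀ x ∈ D, 0 < η x ∧ η x ≤ H) (hp : 0 < p)
    (hlam : 0 ≤ lam) (hα : α ≤ 0) (hαβ : α + β ≤ 0)
    (hΨd : ∀ x ∈ D, ∀ ρ ∈ Ioi (0 : ℝ),
      HasDerivAt (fun t => Ψ (t, x)) (deriv (fun t => Ψ (t, x)) ρ) ρ)
    (hΨdc : ∀ x ∈ D, ContinuousOn (fun ρ => deriv (fun t => Ψ (t, x)) ρ) (Ioi 0))
    (ha : 0 < a) (x : X) :
    ENNReal.ofReal (-(α + β) * lam) * ∫⁻ ρ in {ρ | (ρ, x) ∈ carlemanRegion D η fstar a},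
        ENNReal.ofReal (carlemanWeight lam p (η x) α (β - 1) ρ * ‖Ψ (ρ, x)‖ ^ 2) ≤
      (∫⁻ ρ in {ρ | (ρ, x) ∈ carlemanRegion D η fstar 0},
          ENNReal.ofReal (carlemanWeight lam p (η x) (α - p) (β + 1) ρ *
            ‖deriv (fun t => Ψ (t, x)) ρ‖ ^ 2)) +
        {x | x ∈ D ∧ a < fstar * η x}.indicator (fun x => ENNReal.ofReal lam *
          ENNReal.ofReal (H ^ (-α)) * ENNReal.ofReal (a ^ (α + β) * ‖Ψ (a, x)‖ ^ 2)) x := by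
  by_cases hx : x ∈ D
  · rw [setOf_mem_carlemanRegion hx (hη x hx).1, setOf_mem_carlemanRegion hx (hη x hx).1]
    by_cases hax : a < fstar * η x
    · rw [indicator_of_mem (show x ∈ {x | x ∈ D ∧ a < fstar * η x} from ⟨hx, hax⟩)]
      exact carleman_transport_Ioo_rpow_bound hp (hη x hx).1 (hη x hx).2 ha hax.le hlam hα hαβ
        (hΨd x hx) (hΨdc x hx)
    · simp [Ioo_eq_empty hax]
  · simp [setOf_mem_carlemanRegion_of_notMem hx]

end Region

section Slab

variable {X E : Type*} [TopologicalSpace X] [MeasurableSpace X] [OpensMeasurableSpace X]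
  [NormedAddCommGroup E] [InnerProductSpace ℝ E] {μ : Measure X} [SFinite μ]
  {D : Set X} {η : X → ℝ} {Ψ : ℝ × X → E} {H lam p α β fstar a : ℝ}

theorem carleman_transport_slab (hD : IsOpen D) (hηc : ContinuousOn η D)
    (hη : ∀ x ∈ D, 0 < η x ∧ η x ≤ H) (hp : 0 < p) (hlam : 0 ≤ lam) (hα : α ≤ 0)
    (hαβ : α + β ≤ 0) (hΨ : ContinuousOn Ψ (Ioi 0 ×ˢ D))
    (hΨd : ∀ x ∈ D, ∀ ρ ∈ Ioi (0 : ℝ),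
      HasDerivAt (fun t => Ψ (t, x)) (deriv (fun t => Ψ (t, x)) ρ) ρ)
    (hΨdc : ∀ x ∈ D, ContinuousOn (fun ρ => deriv (fun t => Ψ (t, x)) ρ) (Ioi 0))
    (ha : 0 < a) :
    ENNReal.ofReal (-(α + β) * lam) *
        ∫⁻ z in carlemanRegion D η fstar a,
          ENNReal.ofReal (carlemanWeight lam p (η z.2) α (β - 1) z.1 * ‖Ψ z‖ ^ 2) ∂volume.prod μ ≤
      (∫⁻ z in carlemanRegion D η fstar 0,
          ENNReal.ofReal (carlemanWeight lam p (η z.2) (α - p) (β + 1) z.1 *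
            ‖deriv (fun t => Ψ (t, z.2)) z.1‖ ^ 2) ∂volume.prod μ) +
        ENNReal.ofReal lam * ENNReal.ofReal (H ^ (-α)) *
          ∫⁻ x in {x | x ∈ D ∧ a < fstar * η x},
            ENNReal.ofReal (a ^ (α + β) * ‖Ψ (a, x)‖ ^ 2) ∂μ := by
  borelize E
  have hU : MeasurableSet (Ioi (0 : ℝ) ×ˢ D) := measurableSet_Ioi.prod hD.measurableSet
  have hregion : ∀ b, MeasurableSet (carlemanRegion D η fstar b) := fun b =>
    (hD.carlemanRegion hηc (fun x hx => (hη x hx).1.ne') b).measurableSet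
  have hweight : ∀ α β, ContinuousOn (fun z : ℝ × X => carlemanWeight lam p (η z.2) α β z.1)
      (Ioi 0 ×ˢ D) := fun α β =>
    (hηc.comp continuousOn_snd fun _ hz => hz.2).carlemanWeight lam p α β continuousOn_fst
      (fun z hz => (hη z.2 hz.2).1) fun _ hz => hz.1
  have hΨ' : AEMeasurable (fun z => deriv (fun t => Ψ (t, z.2)) z.1)
      ((volume.prod μ).restrict (Ioi 0 ×ˢ D)) :=
    aemeasurable_deriv_restrict_Ioi_prod hD.measurableSet hΨ fun z hz =>
      (hΨd z.2 hz.2 z.1 hz.1).differentiableAt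
  have hI₁ : AEMeasurable
      (fun z => ENNReal.ofReal (carlemanWeight lam p (η z.2) α (β - 1) z.1 * ‖Ψ z‖ ^ 2))
      ((volume.prod μ).restrict (Ioi 0 ×ˢ D)) :=
    (ENNReal.continuous_ofReal.comp_continuousOn
      ((hweight α (β - 1)).mul (hΨ.norm.pow 2))).aemeasurable hU
  have hI₂ : AEMeasurable (fun z => ENNReal.ofReal (carlemanWeight lam p (η z.2) (α - p) (β + 1)
      z.1 * ‖deriv (fun t => Ψ (t, z.2)) z.1‖ ^ 2)) ((volume.prod μ).restrict (Ioi 0 ×ˢ D)) :=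
    ENNReal.measurable_ofReal.comp_aemeasurable
      (((hweight (α - p) (β + 1)).aemeasurable hU).mul (hΨ'.norm.pow_const 2))
  have hDa : MeasurableSet {x | x ∈ D ∧ a < fstar * η x} :=
    ((continuousOn_const.mul hηc).isOpen_inter_preimage hD isOpen_Ioi).measurableSet
  have hbd : AEMeasurable ({x | x ∈ D ∧ a < fstar * η x}.indicator fun x =>
      ENNReal.ofReal lam * ENNReal.ofReal (H ^ (-α)) *
        ENNReal.ofReal (a ^ (α + β) * ‖Ψ (a, x)‖ ^ 2)) μ := by
    refine (aemeasurable_indicator_iff hDa).2 (AEMeasurable.const_mul ?_ _)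
    refine (ENNReal.continuous_ofReal.comp_continuousOn (continuousOn_const.mul
      ((hΨ.comp (continuousOn_const.prodMk continuousOn_id) fun x hx => ⟨ha, hx.1⟩).norm.pow
        2))).aemeasurable hDa
  rw [setLIntegral_prod_eq_lintegral_slices (hregion a) (hI₁.mono_measure
      (Measure.restrict_mono (carlemanRegion_subset_Ioi_prod ha.le) le_rfl)),
    setLIntegral_prod_eq_lintegral_slices (hregion 0) (hI₂.mono_measure
      (Measure.restrict_mono (carlemanRegion_subset_Ioi_prod le_rfl) le_rfl)),
    ← lintegral_const_mul' _ _ ENNReal.ofReal_ne_top,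
    ← lintegral_const_mul' _ _ (ENNReal.mul_ne_top ENNReal.ofReal_ne_top ENNReal.ofReal_ne_top),
    ← lintegral_indicator hDa, ← lintegral_add_right' _ hbd]
  exact lintegral_mono fun x => by
    dsimp only
    exact carleman_transport_slice hη hp hlam hα hαβ hΨd hΨdc ha x

end Slab

theorem transport_carleman_general
    {n : ℕ} {d : ℕ}
    {D : Set (Fin n → ℝ)} (hD : IsOpen D)
    (η : (Fin n → ℝ) → ℝ) (hηcont : ContinuousOn η D)
    (H : ℝ) (hη : ∀ x ∈ D, 0 < η x ∧ η x ≤ H)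
    (s κ lam p fstar : ℝ) (hκ : (n : ℝ) - 2 ≤ 2 * κ)
    (hκs : 0 < 2 * κ + 2 - s) (hlam : 0 < lam) (hp : 0 < p)
    (Ψ : ℝ × (Fin n → ℝ) → EuclideanSpace ℝ (Fin d))
    (hΨcont : ContinuousOn Ψ (Ioi 0 ×ˢ D))
    (hΨdiff : ∀ x ∈ D, ∀ ρ ∈ Ioi (0 : ℝ),
      HasDerivAt (fun t => Ψ (t, x)) (deriv (fun t => Ψ (t, x)) ρ) ρ)
    (hΨdcont : ∀ x ∈ D, ContinuousOn (fun ρ => deriv (fun t => Ψ (t, x)) ρ) (Ioi 0)) :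
    ENNReal.ofReal ((2 * κ + 2 - s) * lam) *
      (∫⁻ z in {z : ℝ × (Fin n → ℝ) | z.2 ∈ D ∧ 0 < z.1 ∧ z.1 / η z.2 < fstar},
        ENNReal.ofReal (Real.exp (-(lam * (z.1 / η z.2) ^ p / p)) *
          (z.1 / η z.2) ^ ((n : ℝ) - 2 - 2 * κ) * z.1 ^ (s - (n : ℝ) - 1) * ‖Ψ z‖ ^ 2))
    ≤ (∫⁻ z in {z : ℝ × (Fin n → ℝ) | z.2 ∈ D ∧ 0 < z.1 ∧ z.1 / η z.2 < fstar},
        ENNReal.ofReal (Real.exp (-(lam * (z.1 / η z.2) ^ p / p)) *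
          (z.1 / η z.2) ^ ((n : ℝ) - 2 - p - 2 * κ) * z.1 ^ (s - (n : ℝ) + 1) *
          ‖deriv (fun t => Ψ (t, z.2)) z.1‖ ^ 2))
      + ENNReal.ofReal lam * ENNReal.ofReal (H ^ (2 * κ + 2 - (n : ℝ))) *
        Filter.limsup (fun ρs : ℝ =>
          ∫⁻ x in {x : Fin n → ℝ | x ∈ D ∧ ρs < fstar * η x},
            ENNReal.ofReal (ρs ^ (s - 2 * κ - 2) * ‖Ψ (ρs, x)‖ ^ 2))
          (nhdsWithin 0 (Ioi 0)) := by
  rw [show 2 * κ + 2 - s = -(((n : ℝ) - 2 - 2 * κ) + (s - n)) by ring,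
    show (n : ℝ) - 2 - p - 2 * κ = (n - 2 - 2 * κ) - p by ring,
    show 2 * κ + 2 - (n : ℝ) = -((n : ℝ) - 2 - 2 * κ) by ring,
    show s - 2 * κ - 2 = ((n : ℝ) - 2 - 2 * κ) + (s - n) by ring, Measure.volume_eq_prod]
  refine (mul_setLIntegral_carlemanRegion_le_limsup fun a ha =>
    carleman_transport_slab hD hηcont hη hp hlam.le (by linarith) (by linarith) hΨcont hΨdiff
      hΨdcont ha).trans_eq ?_
  rw [limsup_const_add _ _ _ (by isBoundedDefault) (by isBoundedDefault),
    ENNReal.limsup_const_mul_of_ne_top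
      (ENNReal.mul_ne_top ENNReal.ofReal_ne_top ENNReal.ofReal_ne_top)]
  rfl

/-- **Carleman estimate for transport equations** (flat-model version of Proposition 4.2):
for the region `Ω = {ρ/η(x) < f⋆}` near the conformal boundary `{ρ = 0}` and the Carleman
weight `e^{−λ f^p/p} f^{n−2−2κ}` with `f = ρ/η`, the transport derivative `∂_ρ Ψ` controls
`Ψ` up to a boundary term, as an inequality in `[0,∞]` for Lebesgue integrals. -/
theorem transport_carleman
    {n : ℕ} (hn : 1 ≤ n) {d : ℕ} (hd : 1 ≤ d)
    {D : Set (Fin n → ℝ)} (hD : IsOpen D)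
    (η : (Fin n → ℝ) → ℝ) (hηcont : ContinuousOn η D)
    (H : ℝ) (hη : ∀ x ∈ D, 0 < η x ∧ η x ≤ H)
    (s κ lam p fstar : ℝ) (hs : 0 ≤ s) (hκ : (n : ℝ) - 2 ≤ 2 * κ)
    (hκs : 0 < 2 * κ + 2 - s) (hlam : 0 < lam) (hp : 0 < p) (hfstar : 0 < fstar)
    (Ψ : ℝ × (Fin n → ℝ) → EuclideanSpace ℝ (Fin d))
    (hΨcont : ContinuousOn Ψ (Ioi 0 ×ˢ D))
    (hΨdiff : ∀ x ∈ D, ∀ ρ ∈ Ioi (0 : ℝ),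
      HasDerivAt (fun t => Ψ (t, x)) (deriv (fun t => Ψ (t, x)) ρ) ρ)
    (hΨdcont : ∀ x ∈ D, ContinuousOn (fun ρ => deriv (fun t => Ψ (t, x)) ρ) (Ioi 0)) :
    ENNReal.ofReal ((2 * κ + 2 - s) * lam) *
      (∫⁻ z in {z : ℝ × (Fin n → ℝ) | z.2 ∈ D ∧ 0 < z.1 ∧ z.1 / η z.2 < fstar},
        ENNReal.ofReal (Real.exp (-(lam * (z.1 / η z.2) ^ p / p)) *
          (z.1 / η z.2) ^ ((n : ℝ) - 2 - 2 * κ) * z.1 ^ (s - (n : ℝ) - 1) * ‖Ψ z‖ ^ 2))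
    ≤ (∫⁻ z in {z : ℝ × (Fin n → ℝ) | z.2 ∈ D ∧ 0 < z.1 ∧ z.1 / η z.2 < fstar},
        ENNReal.ofReal (Real.exp (-(lam * (z.1 / η z.2) ^ p / p)) *
          (z.1 / η z.2) ^ ((n : ℝ) - 2 - p - 2 * κ) * z.1 ^ (s - (n : ℝ) + 1) *
          ‖deriv (fun t => Ψ (t, z.2)) z.1‖ ^ 2))
      + ENNReal.ofReal lam * ENNReal.ofReal (H ^ (2 * κ + 2 - (n : ℝ))) *
        Filter.limsup (fun ρs : ℝ =>
          ∫⁻ x in {x : Fin n → ℝ | x ∈ D ∧ ρs < fstar * η x},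
            ENNReal.ofReal (ρs ^ (s - 2 * κ - 2) * ‖Ψ (ρs, x)‖ ^ 2))
          (nhdsWithin 0 (Ioi 0)) :=
  transport_carleman_general hD η hηcont H hη s κ lam p fstar hκ hκs hlam hp Ψ hΨcont hΨdiff hΨdcont
end

section
/- Let n ≥ 2 and let q : ℝⁿ → ℝ be the Minkowski quadratic form q(x) := −x₁² + x₂² + ⋯ + xₙ². For a symmetric bilinear form B on ℝⁿ, the following are equivalent: (i) B(Z, Z) > 0 for every nonzero Z ∈ ℝⁿ with q(Z) = 0; (ii) there exists ζ ∈ ℝ such that the quadratic form v ↦ B(v, v) − ζ · q(v) is positive definite on ℝⁿ. -/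
/-!
On the plane spanned by vectors `x`, `y` with `q x < 0 < q y`, the null cone of `q` consists of
two lines, through `x + s₁ y` and `x + s₂ y` with `s₁ s₂ < 0`; a positive combination of the
values of a quadratic form `Q` there is a positive multiple of `Q x - s₁ s₂ Q y`, so `Q` cannot be
nonpositive at both `x` and `y` if it is positive on null vectors. Applied to `Q = B - ζ q`, this
shows that for every `ζ`, `B - ζ q` is positive on the part `{q ≤ 0}` or on the part `{q ≥ 0}`
of the unit sphere. By compactness the two sets of such `ζ` are open and nonempty; since they
cover `ℝ`, which is connected, they meet.
-/

open Matrix Set Metric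

theorem pos_or_pos_of_pos_at_roots {a b c a' b' c' : ℝ} (ha : a < 0) (hc : 0 < c)
    (h : ∀ s, c * (s * s) + b * s + a = 0 → 0 < c' * (s * s) + b' * s + a') :
    0 < a' ∨ 0 < c' := by
  obtain ⟨s₁, hs₁⟩ := exists_quadratic_eq_zero hc.ne'
    ⟨√(discrim c b a), (Real.mul_self_sqrt (by unfold discrim; nlinarith)).symm⟩
  set s₂ := -b / c - s₁
  have hs₂ : c * (s₂ * s₂) + b * s₂ + a = 0 := by
    simp only [s₂]; field_simp; linear_combination c * hs₁
  have hvieta : c * (s₁ * s₂) = a := by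
    simp only [s₂]; field_simp; linear_combination -hs₁
  have hprod : s₁ * s₂ < 0 := by nlinarith
  have key : (s₂ * s₂ - s₁ * s₂) * (c' * (s₁ * s₁) + b' * s₁ + a')
      + (s₁ * s₁ - s₁ * s₂) * (c' * (s₂ * s₂) + b' * s₂ + a')
      = (s₂ - s₁) ^ 2 * (a' - s₁ * s₂ * c') := by ring
  have hpos : 0 < (s₂ - s₁) ^ 2 * (a' - s₁ * s₂ * c') := by
    rw [← key]
    exact add_pos (mul_pos (by nlinarith) (h s₁ hs₁)) (mul_pos (by nlinarith) (h s₂ hs₂))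
  by_contra! ⟨ha', hc'⟩
  nlinarith [sq_nonneg (s₂ - s₁), mul_nonneg (neg_nonneg.2 hprod.le) (neg_nonneg.2 hc')]

namespace QuadraticMap

variable {V : Type*} [AddCommGroup V] [Module ℝ V]

theorem map_add_smul (Q : QuadraticMap ℝ V ℝ) (x y : V) (s : ℝ) :
    Q (x + s • y) = Q y * (s * s) + polar Q x y * s + Q x := by
  rw [QuadraticMap.map_add Q x (s • y), QuadraticMap.map_smul, polar_smul_right, smul_eq_mul,
    smul_eq_mul]
  ring

theorem pos_or_pos_of_pos_on_null (f g : QuadraticMap ℝ V ℝ)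
    (hnull : ∀ z ≠ 0, g z = 0 → 0 < f z) {x y : V} (hx : g x < 0) (hy : 0 < g y) :
    0 < f x ∨ 0 < f y := by
  refine pos_or_pos_of_pos_at_roots (b := polar g x y) (b' := polar f x y) hx hy fun s hs => ?_
  rw [← map_add_smul] at hs ⊢
  refine hnull _ (fun h => ?_) hs
  rw [eq_neg_of_add_eq_zero_left h, ← neg_smul, QuadraticMap.map_smul, smul_eq_mul] at hx
  nlinarith [mul_self_nonneg (-s)]

end QuadraticMap

section Compact

variable {X : Type*} [TopologicalSpace X] {f g : X → ℝ} {K : Set X}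

theorem IsCompact.isOpen_setOf_forall_mul_lt (hK : IsCompact K) (hf : Continuous f)
    (hg : Continuous g) : IsOpen {ζ : ℝ | ∀ x ∈ K, ζ * g x < f x} := by
  refine isOpen_iff_mem_nhds.2 fun ζ hζ => hK.eventually_forall_of_forall_eventually fun x hx => ?_
  exact (isOpen_lt (continuous_fst.mul (hg.comp continuous_snd)) (hf.comp continuous_snd)).mem_nhds
    (hζ x hx)

theorem IsCompact.exists_forall_mul_lt (hK : IsCompact K) (hf : Continuous f)
    (hg : Continuous g) (hg_nonpos : ∀ x ∈ K, g x ≤ 0) (hnull : ∀ x ∈ K, g x = 0 → 0 < f x) :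
    ∃ ζ : ℝ, ∀ x ∈ K, ζ * g x < f x := by
  -- on `K` the sets `{N * g < f}` increase with `N`; `{0 < g}` makes them increase everywhere
  let U : ℕ → Set X := fun N => {x | N * g x < f x} ∪ {x | 0 < g x}
  have hU_mono : Monotone U := by
    intro N M hNM x hx
    rcases hx with hx | hx
    · rcases le_or_gt (g x) 0 with hgx | hgx
      · exact Or.inl (lt_of_le_of_lt (mul_le_mul_of_nonpos_right (by exact_mod_cast hNM) hgx) hx)
      · exact Or.inr hgx
    · exact Or.inr hx
  have hK_cover : K ⊆ ⋃ N, U N := by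
    intro x hx
    rcases (hg_nonpos x hx).lt_or_eq with hgx | hgx
    · obtain ⟨N, hN⟩ := exists_nat_gt (f x / g x)
      exact mem_iUnion.2 ⟨N, Or.inl ((div_lt_iff_of_neg hgx).1 hN)⟩
    · exact mem_iUnion.2 ⟨0, Or.inl (by simpa [hgx] using hnull x hx hgx)⟩
  obtain ⟨N, hN⟩ := hK.elim_directed_cover U
    (fun N => (isOpen_lt (continuous_const.mul hg) hf).union (isOpen_lt continuous_const hg))
    hK_cover hU_mono.directed_le
  exact ⟨N, fun x hx => (hN hx).resolve_right (hg_nonpos x hx).not_gt⟩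

end Compact

namespace QuadraticMap

variable {E : Type*} [NormedAddCommGroup E] [NormedSpace ℝ E]

theorem pos_of_pos_on_sphere (Q : QuadraticMap ℝ E ℝ) (h : ∀ x ∈ sphere (0 : E) 1, 0 < Q x)
    {v : E} (hv : v ≠ 0) : 0 < Q v := by
  have hnorm : ‖v‖ ≠ 0 := norm_ne_zero_iff.2 hv
  have hunit : ‖v‖⁻¹ • v ∈ sphere (0 : E) 1 := by
    rw [mem_sphere_zero_iff_norm, norm_smul, norm_inv, norm_norm, inv_mul_cancel₀ hnorm]
  have hscale : Q v = (‖v‖ * ‖v‖) * Q (‖v‖⁻¹ • v) := by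
    rw [QuadraticMap.map_smul, smul_eq_mul, ← mul_assoc, ← mul_mul_mul_comm,
      mul_inv_cancel₀ hnorm, one_mul, one_mul]
  rw [hscale]
  exact mul_pos (mul_self_pos.2 hnorm) (h _ hunit)

/-- **Finsler's lemma**. -/
theorem exists_pos_sub_smul_of_pos_on_null [ProperSpace E] (f g : QuadraticMap ℝ E ℝ)
    (hf : Continuous f) (hg : Continuous g) (hnull : ∀ z ≠ 0, g z = 0 → 0 < f z) :
    ∃ ζ : ℝ, ∀ v ≠ 0, 0 < f v - ζ * g v := by
  have hS : IsCompact (sphere (0 : E) 1) := isCompact_sphere 0 1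
  have hS_ne : ∀ x ∈ sphere (0 : E) 1, x ≠ 0 := fun x hx => ne_zero_of_mem_unit_sphere ⟨x, hx⟩
  set Kneg := sphere (0 : E) 1 ∩ {x | g x ≤ 0}
  set Kpos := sphere (0 : E) 1 ∩ {x | 0 ≤ g x}
  set L := {ζ : ℝ | ∀ x ∈ Kneg, ζ * g x < f x}
  set U := {ζ : ℝ | ∀ x ∈ Kpos, ζ * g x < f x}
  have hKneg : IsCompact Kneg := hS.inter_right (isClosed_le hg continuous_const)
  have hKpos : IsCompact Kpos := hS.inter_right (isClosed_le continuous_const hg)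
  have hL_ne : L.Nonempty :=
    hKneg.exists_forall_mul_lt hf hg (fun x hx => hx.2) fun x hx => hnull x (hS_ne x hx.1)
  have hU_ne : U.Nonempty := by
    obtain ⟨ζ, hζ⟩ := hKpos.exists_forall_mul_lt hf hg.neg (fun x hx => neg_nonpos.2 hx.2)
      fun x hx hgx => hnull x (hS_ne x hx.1) (neg_eq_zero.1 hgx)
    exact ⟨-ζ, fun x hx => by simpa using hζ x hx⟩
  have hLU : L ∪ U = univ := by
    refine eq_univ_of_forall fun ζ => ?_
    by_contra hζ
    obtain ⟨x, hx, hfx⟩ : ∃ x ∈ Kneg, f x ≤ ζ * g x := by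
      by_contra! h; exact hζ (Or.inl h)
    obtain ⟨y, hy, hfy⟩ : ∃ y ∈ Kpos, f y ≤ ζ * g y := by
      by_contra! h; exact hζ (Or.inr h)
    have hgx : g x < 0 := hx.2.lt_of_ne fun h => by
      linarith [hnull x (hS_ne x hx.1) h, show ζ * g x = 0 by rw [h, mul_zero]]
    have hgy : 0 < g y := hy.2.lt_of_ne' fun h => by
      linarith [hnull y (hS_ne y hy.1) h, show ζ * g y = 0 by rw [h, mul_zero]]
    have hshift : ∀ z ≠ 0, g z = 0 → 0 < (f - ζ • g) z := fun z hz hgz => by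
      simpa [hgz] using hnull z hz hgz
    rcases pos_or_pos_of_pos_on_null (f - ζ • g) g hshift hgx hgy with h | h <;>
      simp only [_root_.sub_apply, _root_.smul_apply, smul_eq_mul] at h <;> linarith
  obtain ⟨ζ, hζL, hζU⟩ := nonempty_inter (hKneg.isOpen_setOf_forall_mul_lt hf hg)
    (hKpos.isOpen_setOf_forall_mul_lt hf hg) hLU hL_ne hU_ne
  refine ⟨ζ, fun v hv => ?_⟩
  refine pos_of_pos_on_sphere (f - ζ • g) (fun x hx => ?_) hv
  simp only [_root_.sub_apply, _root_.smul_apply, smul_eq_mul, sub_pos]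
  rcases le_total (g x) 0 with hgx | hgx
  · exact hζL x ⟨hx, hgx⟩
  · exact hζU x ⟨hx, hgx⟩

end QuadraticMap

theorem null_positivity_iff_posdef_shift_general
    {n : ℕ} (B : Matrix (Fin n) (Fin n) ℝ) :
    (∀ Z : Fin n → ℝ, Z ≠ 0 →
        (∑ i : Fin n, (if (i : ℕ) = 0 then (-1 : ℝ) else 1) * Z i ^ 2) = 0 →
        0 < Z ⬝ᵥ B.mulVec Z) ↔
    (∃ ζ : ℝ, ∀ v : Fin n → ℝ, v ≠ 0 →
        0 < v ⬝ᵥ B.mulVec v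
          - ζ * ∑ i : Fin n, (if (i : ℕ) = 0 then (-1 : ℝ) else 1) * v i ^ 2) := by
  set q := QuadraticMap.weightedSumSquares ℝ fun i : Fin n => if (i : ℕ) = 0 then (-1 : ℝ) else 1
  have hq (v : Fin n → ℝ) :
      ∑ i : Fin n, (if (i : ℕ) = 0 then (-1 : ℝ) else 1) * v i ^ 2 = q v := by
    simp [q, sq]
  have hB (v : Fin n → ℝ) : v ⬝ᵥ B *ᵥ v = B.toQuadraticForm' v := by
    simp [Matrix.toQuadraticForm', toLinearMap₂'_apply']
  have hq_cont : Continuous q := Continuous.congr (by fun_prop) hq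
  have hB_cont : Continuous B.toQuadraticForm' := Continuous.congr (by fun_prop) hB
  simp only [hq, hB]
  refine ⟨QuadraticMap.exists_pos_sub_smul_of_pos_on_null _ _ hB_cont hq_cont, ?_⟩
  rintro ⟨ζ, hζ⟩ Z hZ hZq
  simpa [hZq] using hζ Z hZ

/-- **Positivity on the null cone versus positive definiteness** (pointwise content of
Remark 1.8): a symmetric bilinear form `B` on `ℝⁿ` is positive on the nonzero null
vectors of the Minkowski form `q(x) = −x₀² + x₁² + ⋯` if and only if `B − ζ·q` is
positive definite for some `ζ ∈ ℝ`. -/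
theorem null_positivity_iff_posdef_shift
    {n : ℕ} (hn : 2 ≤ n) (B : Matrix (Fin n) (Fin n) ℝ) (hB : B.IsSymm) :
    (∀ Z : Fin n → ℝ, Z ≠ 0 →
        (∑ i : Fin n, (if (i : ℕ) = 0 then (-1 : ℝ) else 1) * Z i ^ 2) = 0 →
        0 < Z ⬝ᵥ B.mulVec Z) ↔
    (∃ ζ : ℝ, ∀ v : Fin n → ℝ, v ≠ 0 →
        0 < v ⬝ᵥ B.mulVec v
          - ζ * ∑ i : Fin n, (if (i : ℕ) = 0 then (-1 : ℝ) else 1) * v i ^ 2) :=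
  null_positivity_iff_posdef_shift_general B
end

section
/- Let a < b be real numbers. There exist a function η : [a,b] → ℝ, twice continuously differentiable, and a constant c > 0 such that η > 0 on (a,b), η(a) = η(b) = 0, and η″(t) + η(t) ≥ c · η(t) for all t ∈ (a,b), if and only if b − a > π. -/
/-!
If `b - a > π`, then `η t = sin (π (t - a) / (b - a))` satisfies `η'' + η = c η` with
`c = 1 - π² / (b - a)² > 0`. Conversely, suppose `b - a ≤ π` and compare `η` with `sin (· - a)`,
a solution of `u'' + u = 0`, by a Sturm argument: the Wronskian
`W = η' sin (· - a) - η cos (· - a)` has `W' = (η'' + η) sin (· - a) > 0` on `(a, b)`, so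
`W b > W a = -η a = 0`; but `W b = η' b sin (b - a) ≤ 0`, because `η ≥ 0` vanishes at `b`.
-/

open Set Real

lemma IsMinOn.derivWithin_Icc_right_nonpos {η : ℝ → ℝ} {a b : ℝ} (hab : a < b)
    (h : IsMinOn η (Icc a b) b) : derivWithin η (Icc a b) b ≤ 0 := by
  have hcone : a - b ∈ posTangentConeAt (Icc a b) b :=
    sub_mem_posTangentConeAt_of_segment_subset <| (convex_Icc a b).segment_subset
      (right_mem_Icc.2 hab.le) (left_mem_Icc.2 hab.le)
  have := h.localize.fderivWithin_nonneg hcone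
  rw [show a - b = (a - b) • (1 : ℝ) by simp, map_smul, fderivWithin_derivWithin,
    smul_eq_mul] at this
  nlinarith

lemma ContDiffOn.hasDerivAt_derivWithin_Icc {η : ℝ → ℝ} {a b t : ℝ}
    (hη : ContDiffOn ℝ 2 η (Icc a b)) (ht : t ∈ Ioo a b) :
    HasDerivAt η (derivWithin η (Icc a b) t) t ∧
      HasDerivAt (derivWithin η (Icc a b)) (deriv (deriv η) t) t := by
  have hab : a < b := ht.1.trans ht.2
  have hnhds : Icc a b ∈ nhds t := Icc_mem_nhds ht.1 ht.2
  have hη' : HasDerivAt η (derivWithin η (Icc a b) t) t :=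
    ((hη.differentiableOn (by norm_num)) t (Ioo_subset_Icc_self ht)).hasDerivWithinAt.hasDerivAt
      hnhds
  have hf : HasDerivAt (derivWithin η (Icc a b)) (deriv (derivWithin η (Icc a b)) t) t :=
    (((hη.derivWithin (m := 1) (uniqueDiffOn_Icc hab) (by norm_num)).differentiableOn
      one_ne_zero) t (Ioo_subset_Icc_self ht)).differentiableAt hnhds |>.hasDerivAt
  have heq : deriv η =ᶠ[nhds t] derivWithin η (Icc a b) := by
    filter_upwards [Ioo_mem_nhds ht.1 ht.2] with s hs
    exact (derivWithin_of_mem_nhds (Icc_mem_nhds hs.1 hs.2)).symm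
  exact ⟨hη', heq.deriv_eq ▸ hf⟩

lemma hasDerivAt_wronskian_sin {η f : ℝ → ℝ} {f' a t : ℝ} (hη : HasDerivAt η (f t) t)
    (hf : HasDerivAt f f' t) :
    HasDerivAt (fun s ↦ f s * sin (s - a) - η s * cos (s - a)) ((f' + η t) * sin (t - a)) t := by
  have hshift : HasDerivAt (fun s ↦ s - a) 1 t := (hasDerivAt_id t).sub_const a
  exact ((hf.mul hshift.sin).sub (hη.mul hshift.cos)).congr_deriv (by ring)

lemma strictMonoOn_wronskian_sin {η : ℝ → ℝ} {a b : ℝ} (hab : a < b) (hπ : b - a ≤ π)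
    (hη : ContDiffOn ℝ 2 η (Icc a b)) (hsuper : ∀ t ∈ Ioo a b, 0 < deriv (deriv η) t + η t) :
    StrictMonoOn (fun t ↦ derivWithin η (Icc a b) t * sin (t - a) - η t * cos (t - a))
      (Icc a b) := by
  refine strictMonoOn_of_deriv_pos (convex_Icc a b) ?_ fun t ht ↦ ?_
  · have hη' := hη.continuousOn_derivWithin (uniqueDiffOn_Icc hab) (by norm_num)
    exact (hη'.mul (by fun_prop)).sub (hη.continuousOn.mul (by fun_prop))
  rw [interior_Icc] at ht
  obtain ⟨hη', hη''⟩ := hη.hasDerivAt_derivWithin_Icc ht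
  rw [(hasDerivAt_wronskian_sin hη' hη'').deriv]
  exact mul_pos (hsuper t ht) (sin_pos_of_pos_of_lt_pi (by linarith [ht.1]) (by linarith [ht.2]))

theorem pi_lt_sub_of_nonneg_supersolution {η : ℝ → ℝ} {a b : ℝ} (hab : a < b)
    (hη : ContDiffOn ℝ 2 η (Icc a b)) (hnonneg : ∀ t ∈ Icc a b, 0 ≤ η t) (ha : η a = 0)
    (hb : η b = 0) (hsuper : ∀ t ∈ Ioo a b, 0 < deriv (deriv η) t + η t) : π < b - a := by
  by_contra! hπ
  have hW := strictMonoOn_wronskian_sin hab hπ hη hsuper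
    (left_mem_Icc.2 hab.le) (right_mem_Icc.2 hab.le) hab
  have hslope : derivWithin η (Icc a b) b ≤ 0 :=
    IsMinOn.derivWithin_Icc_right_nonpos hab fun t ht ↦ hb ▸ hnonneg t ht
  have hsin : 0 ≤ sin (b - a) := sin_nonneg_of_nonneg_of_le_pi (by linarith) hπ
  simp only [ha, hb, sub_self, sin_zero, cos_zero] at hW
  nlinarith

lemma deriv_deriv_sin_mul_sub (k a t : ℝ) :
    deriv (deriv fun s ↦ sin (k * (s - a))) t = -k ^ 2 * sin (k * (t - a)) := by
  have hlin (s : ℝ) : HasDerivAt (fun s ↦ k * (s - a)) k s := by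
    simpa using ((hasDerivAt_id s).sub_const a).const_mul k
  have h1 : deriv (fun s ↦ sin (k * (s - a))) = fun s ↦ cos (k * (s - a)) * k :=
    funext fun s ↦ (hlin s).sin.deriv
  rw [h1, ((hlin t).cos.mul_const k).deriv]
  ring

/-- **ODE characterisation of the GNCC on AdS time slabs** (Proposition 1.9): there is a
`C²` function `η` on `[a,b]`, positive on `(a,b)`, vanishing at the endpoints, with
`η″ + η ≥ c·η` on `(a,b)` for some `c > 0`, if and only if `b − a > π`. -/
theorem gncc_ode_iff_length_gt_pi (a b : ℝ) (hab : a < b) :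
    (∃ (η : ℝ → ℝ) (c : ℝ), 0 < c ∧
      ContDiffOn ℝ 2 η (Icc a b) ∧
      (∀ t ∈ Ioo a b, 0 < η t) ∧ η a = 0 ∧ η b = 0 ∧
      (∀ t ∈ Ioo a b, c * η t ≤ deriv (deriv η) t + η t)) ↔
    Real.pi < b - a := by
  constructor
  · rintro ⟨η, c, hc, hη, hpos, ha, hb, hode⟩
    refine pi_lt_sub_of_nonneg_supersolution hab hη (fun t ht ↦ ?_) ha hb
      fun t ht ↦ (mul_pos hc (hpos t ht)).trans_le (hode t ht)
    rcases eq_endpoints_or_mem_Ioo_of_mem_Icc ht with rfl | rfl | ht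
    exacts [ha.ge, hb.ge, (hpos t ht).le]
  · intro hπ
    have hL : 0 < b - a := pi_pos.trans hπ
    set k := π / (b - a)
    have hk0 : 0 < k := div_pos pi_pos hL
    have hkL : k * (b - a) = π := div_mul_cancel₀ _ hL.ne'
    have hk1 : k < 1 := (div_lt_one hL).2 hπ
    refine ⟨fun t ↦ sin (k * (t - a)), 1 - k ^ 2, by nlinarith, by fun_prop, fun t ht ↦ ?_,
      by simp, by simp [hkL], fun t _ ↦ le_of_eq ?_⟩
    · exact sin_pos_of_pos_of_lt_pi (mul_pos hk0 (by linarith [ht.1])) (by nlinarith [ht.2])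
    · rw [deriv_deriv_sin_mul_sub]
      ring
end

section
/- Let a < b be real numbers, let c ∈ (0,1), and let η : [a,b] → ℝ be continuous on [a,b] and twice differentiable on (a,b), with η > 0 on (a,b), η(a) = η(b) = 0, and η″(t) + η(t) ≥ c · η(t) for all t ∈ (a,b). Then b − a ≥ π/√(1−c). Moreover, if instead c ≥ 1, then no function η with these properties exists. -/
/-!
Compare `η` with a positive solution `y` of `y″ + (1 − c) y ≤ 0` on `[a, b]`: `y = cos (ω (t − m))`
with `ω = √(1 − c)` and `m` the midpoint when `c < 1` and `b − a < π / ω`, and `y = 1` when `c ≥ 1`.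
The Wronskian `W = η y′ − η′ y` satisfies `W′ = η y″ − η″ y ≤ 0`, while `(η / y)′ = −W / y²`.
Since `η / y` vanishes at both ends and is positive inside, it first increases and later
decreases, so `W` changes sign from negative to positive, contradicting its monotonicity.
-/

open Set Real

lemma exists_hasDerivAt_pos_lt_neg {a b : ℝ} (hab : a < b) {f f' : ℝ → ℝ}
    (hf : ContinuousOn f (Icc a b)) (hf' : ∀ t ∈ Ioo a b, HasDerivAt f (f' t) t)
    (ha : f a = 0) (hb : f b = 0) (hpos : ∀ t ∈ Ioo a b, 0 < f t) :
    ∃ s ∈ Ioo a b, ∃ t ∈ Ioo a b, s < t ∧ 0 < f' s ∧ f' t < 0 := by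
  obtain ⟨m, ham, hmb⟩ := exists_between hab
  have hfm : 0 < f m := hpos m ⟨ham, hmb⟩
  obtain ⟨s, hs, hfs⟩ := exists_hasDerivAt_eq_slope f f' ham
    (hf.mono (Icc_subset_Icc_right hmb.le)) fun t ht => hf' t ⟨ht.1, ht.2.trans hmb⟩
  obtain ⟨t, ht, hft⟩ := exists_hasDerivAt_eq_slope f f' hmb
    (hf.mono (Icc_subset_Icc_left ham.le)) fun t ht => hf' t ⟨ham.trans ht.1, ht.2⟩
  refine ⟨s, ⟨hs.1, hs.2.trans hmb⟩, t, ⟨ham.trans ht.1, ht.2⟩, hs.2.trans ht.1, ?_, ?_⟩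
  · rw [hfs, ha, sub_zero]
    exact div_pos hfm (by linarith)
  · rw [hft, hb, zero_sub, neg_div, neg_lt_zero]
    exact div_pos hfm (by linarith)

lemma antitoneOn_wronskian {a b : ℝ} {u u' u'' v v' v'' : ℝ → ℝ}
    (hu : ∀ t ∈ Ioo a b, HasDerivAt u (u' t) t) (hu' : ∀ t ∈ Ioo a b, HasDerivAt u' (u'' t) t)
    (hv : ∀ t ∈ Ioo a b, HasDerivAt v (v' t) t) (hv' : ∀ t ∈ Ioo a b, HasDerivAt v' (v'' t) t)
    (h : ∀ t ∈ Ioo a b, u t * v'' t ≤ u'' t * v t) :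
    AntitoneOn (fun t => u t * v' t - u' t * v t) (Ioo a b) := by
  have hW : ∀ t ∈ Ioo a b, HasDerivAt (fun t => u t * v' t - u' t * v t)
      (u' t * v' t + u t * v'' t - (u'' t * v t + u' t * v' t)) t := fun t ht =>
    ((hu t ht).mul (hv' t ht)).sub ((hu' t ht).mul (hv t ht))
  refine antitoneOn_of_hasDerivWithinAt_nonpos (convex_Ioo a b)
    (f' := fun t => u' t * v' t + u t * v'' t - (u'' t * v t + u' t * v' t))
    (fun t ht => (hW t ht).continuousAt.continuousWithinAt) (fun t ht => ?_) fun t ht => ?_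
  <;> rw [interior_Ioo] at ht
  · exact (hW t ht).hasDerivWithinAt
  · linarith [h t ht]

theorem sturm_comparison {a b : ℝ} (hab : a < b) {q η η' η'' y y' y'' : ℝ → ℝ}
    (hη : ContinuousOn η (Icc a b)) (hη' : ∀ t ∈ Ioo a b, HasDerivAt η (η' t) t)
    (hη'' : ∀ t ∈ Ioo a b, HasDerivAt η' (η'' t) t)
    (hη_pos : ∀ t ∈ Ioo a b, 0 < η t) (ha : η a = 0) (hb : η b = 0)
    (hηq : ∀ t ∈ Ioo a b, 0 ≤ η'' t + q t * η t)
    (hy : ContinuousOn y (Icc a b)) (hy_pos : ∀ t ∈ Icc a b, 0 < y t)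
    (hy' : ∀ t ∈ Ioo a b, HasDerivAt y (y' t) t) (hy'' : ∀ t ∈ Ioo a b, HasDerivAt y' (y'' t) t)
    (hyq : ∀ t ∈ Ioo a b, y'' t + q t * y t ≤ 0) : False := by
  set W := fun t => η t * y' t - η' t * y t
  have hW : AntitoneOn W (Ioo a b) := antitoneOn_wronskian hη' hη'' hy' hy'' fun t ht => by
    have hηy := mul_nonpos_of_nonneg_of_nonpos (hη_pos t ht).le (hyq t ht)
    have hyη := mul_nonneg (hy_pos t (Ioo_subset_Icc_self ht)).le (hηq t ht)
    linarith
  set r' := fun t => (η' t * y t - η t * y' t) / y t ^ 2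
  have hr : ∀ t ∈ Ioo a b, HasDerivAt (η / y) (r' t) t := fun t ht =>
    (hη' t ht).div (hy' t ht) (hy_pos t (Ioo_subset_Icc_self ht)).ne'
  have hW_eq : ∀ t ∈ Ioo a b, W t = -r' t * y t ^ 2 := fun t ht => by
    have := (hy_pos t (Ioo_subset_Icc_self ht)).ne'
    simp only [W, r']
    field_simp
    ring
  obtain ⟨s, hs, t, ht, hst, hr's, hr't⟩ := exists_hasDerivAt_pos_lt_neg hab
    (hη.div hy fun t ht => (hy_pos t ht).ne') hr (by simp [ha]) (by simp [hb])
    fun t ht => div_pos (hη_pos t ht) (hy_pos t (Ioo_subset_Icc_self ht))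
  have hWs : W s < 0 := by
    rw [hW_eq s hs, neg_mul, neg_lt_zero]
    exact mul_pos hr's (pow_pos (hy_pos s (Ioo_subset_Icc_self hs)) 2)
  have hWt : 0 < W t := by
    rw [hW_eq t ht, neg_mul, neg_pos]
    exact mul_neg_of_neg_of_pos hr't (pow_pos (hy_pos t (Ioo_subset_Icc_self ht)) 2)
  linarith [hW hs ht hst.le]

lemma cos_pos_of_mul_lt_pi {a b ω t : ℝ} (hω : 0 ≤ ω) (hωab : ω * (b - a) < π)
    (ht : t ∈ Icc a b) : 0 < cos (ω * (t - (a + b) / 2)) := by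
  have : |ω * (t - (a + b) / 2)| ≤ ω * ((b - a) / 2) := by
    rw [abs_mul, abs_of_nonneg hω]
    exact mul_le_mul_of_nonneg_left (abs_sub_le_iff.2 ⟨by linarith [ht.2], by linarith [ht.1]⟩) hω
  exact cos_pos_of_mem_Ioo (abs_lt.1 (by linarith))

lemma hasDerivAt_cos_mul_sub (ω m t : ℝ) :
    HasDerivAt (fun t => cos (ω * (t - m))) (-ω * sin (ω * (t - m))) t :=
  (((hasDerivAt_id' t).sub_const m).const_mul ω).cos.congr_deriv (by ring)

lemma hasDerivAt_neg_mul_sin_mul_sub (ω m t : ℝ) :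
    HasDerivAt (fun t => -ω * sin (ω * (t - m))) (-ω ^ 2 * cos (ω * (t - m))) t :=
  ((((hasDerivAt_id' t).sub_const m).const_mul ω).sin.const_mul (-ω)).congr_deriv (by ring)

theorem sturm_comparison_lower_bound_general
    {a b c : ℝ} (hab : a < b) (η : ℝ → ℝ)
    (hcont : ContinuousOn η (Icc a b))
    (hd1 : ∀ t ∈ Ioo a b, DifferentiableAt ℝ η t)
    (hd2 : ∀ t ∈ Ioo a b, DifferentiableAt ℝ (deriv η) t)
    (hpos : ∀ t ∈ Ioo a b, 0 < η t)
    (ha : η a = 0) (hb : η b = 0)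
    (hode : ∀ t ∈ Ioo a b, c * η t ≤ deriv (deriv η) t + η t) :
    (c < 1 → Real.pi / Real.sqrt (1 - c) ≤ b - a) ∧ (1 ≤ c → False) := by
  have sturm (y y' y'' : ℝ → ℝ) := sturm_comparison (q := fun _ => 1 - c) (y := y) (y' := y')
    (y'' := y'') hab hcont (fun t ht => (hd1 t ht).hasDerivAt) (fun t ht => (hd2 t ht).hasDerivAt)
    hpos ha hb fun t ht => by linarith [hode t ht]
  refine ⟨fun hc => ?_, fun hc => ?_⟩
  · by_contra! hshort
    set ω := √(1 - c)
    have hω : 0 < ω := sqrt_pos.2 (by linarith)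
    have hω_sq : ω ^ 2 = 1 - c := sq_sqrt (by linarith)
    have hωab : ω * (b - a) < π := by rwa [lt_div_iff₀' hω] at hshort
    exact sturm _ _ _ (by fun_prop) (fun t => cos_pos_of_mul_lt_pi hω.le hωab)
      (fun t _ => hasDerivAt_cos_mul_sub ω _ t) (fun t _ => hasDerivAt_neg_mul_sin_mul_sub ω _ t)
      fun t _ => by rw [hω_sq]; linarith
  · exact sturm _ _ _ continuousOn_const (fun _ _ => one_pos) (fun t _ => hasDerivAt_const t 1)
      (fun t _ => hasDerivAt_const t 0) fun _ _ => by linarith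

/-- **Sharp Sturm comparison lemma** (necessity direction of Proposition 1.9): if `η` is
continuous on `[a,b]`, twice differentiable and positive on `(a,b)`, vanishes at the
endpoints, and satisfies `η″ + η ≥ c·η` on `(a,b)` with `0 < c`, then `b − a ≥ π/√(1−c)`
when `c < 1`, and no such `η` exists when `c ≥ 1`. -/
theorem sturm_comparison_lower_bound
    {a b c : ℝ} (hab : a < b) (hc : 0 < c) (η : ℝ → ℝ)
    (hcont : ContinuousOn η (Icc a b))
    (hd1 : ∀ t ∈ Ioo a b, DifferentiableAt ℝ η t)
    (hd2 : ∀ t ∈ Ioo a b, DifferentiableAt ℝ (deriv η) t)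
    (hpos : ∀ t ∈ Ioo a b, 0 < η t)
    (ha : η a = 0) (hb : η b = 0)
    (hode : ∀ t ∈ Ioo a b, c * η t ≤ deriv (deriv η) t + η t) :
    (c < 1 → Real.pi / Real.sqrt (1 - c) ≤ b - a) ∧ (1 ≤ c → False) :=
  sturm_comparison_lower_bound_general hab η hcont hd1 hd2 hpos ha hb hode
end

section
/- Let 0 ≤ B < C be real numbers. Then there exists T > 0 such that for every L > T there exist a twice continuously differentiable function η : [0,L] → ℝ and a constant ε > 0 with η > 0 on (0,L), η(0) = η(L) = 0, and η″(t) − 2B·|η′(t)| + C²·η(t) ≥ ε · η(t) for all t ∈ (0,L). -/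
/-!
Rather than gluing two damped-oscillator branches, take `η t = sin (ω t) ^ (n + 2)` with
`ω = π / L`. With `s = sin (ω t)` and `y = ω cos (ω t)`, the quantity
`η″ − 2B|η′| + C²η − ε η` equals `s ^ n` times a quadratic form in `(|y|, s)`, which is
nonnegative as soon as its discriminant is. For `ε = (C² − B²)/4` this holds once
`2B² ≤ n (C² − B²)` (a large power makes the damping term negligible against `η″`) and
`(n + 2) ω² ≤ (C² − B²)/4` (a long interval).
-/

open Set Real

lemma hasDerivAt_sin_mul_pow (ω : ℝ) (n : ℕ) (t : ℝ) :
    HasDerivAt (fun t => sin (ω * t) ^ (n + 1))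
      ((n + 1) * sin (ω * t) ^ n * (cos (ω * t) * ω)) t := by
  simpa using (hasDerivAt_const_mul ω (x := t)).sin.fun_pow (n + 1)

lemma deriv_sin_mul_pow_add_two (ω : ℝ) (n : ℕ) :
    deriv (fun t => sin (ω * t) ^ (n + 2)) =
      fun t => (n + 2) * sin (ω * t) ^ (n + 1) * (cos (ω * t) * ω) := by
  funext t
  rw [(hasDerivAt_sin_mul_pow ω (n + 1) t).deriv]
  push_cast
  ring

lemma deriv_deriv_sin_mul_pow (ω : ℝ) (n : ℕ) (t : ℝ) :
    deriv (deriv fun t => sin (ω * t) ^ (n + 2)) t =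
      (n + 2) * ((n + 1) * sin (ω * t) ^ n * (cos (ω * t) * ω) ^ 2
        - ω ^ 2 * sin (ω * t) ^ (n + 2)) := by
  have hcos : HasDerivAt (fun t => cos (ω * t) * ω) (-sin (ω * t) * ω * ω) t := by
    simpa using (hasDerivAt_const_mul ω (x := t)).cos.mul_const ω
  rw [deriv_sin_mul_pow_add_two,
    (((hasDerivAt_sin_mul_pow ω n t).const_mul ((n : ℝ) + 2)).fun_mul hcos).deriv]
  ring

lemma quadratic_form_nonneg_of_sq_le {a b c : ℝ} (ha : 0 < a) (h : b ^ 2 ≤ 4 * a * c) (x y : ℝ) :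
    0 ≤ a * x ^ 2 - b * x * y + c * y ^ 2 := by
  nlinarith [sq_nonneg (2 * a * x - b * y), sq_nonneg y]

lemma mul_div_sq_lt_one_of_mul_sqrt_lt {a b L : ℝ} (hb : 0 < b) (h : b * √a < L) :
    a * (b / L) ^ 2 < 1 := by
  have hL : 0 < L := (by positivity : 0 ≤ b * √a).trans_lt h
  have ha : a < (L / b) ^ 2 := (sqrt_lt' (by positivity)).1 (by rwa [lt_div_iff₀' hb])
  rw [div_pow, ← lt_div_iff₀ (by positivity), one_div_div, ← div_pow]
  exact ha

lemma sin_pow_damped_bound {B C ω s y : ℝ} {n : ℕ} (hn : 2 * B ^ 2 ≤ n * (C ^ 2 - B ^ 2))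
    (hω : (n + 2) * ω ^ 2 ≤ (C ^ 2 - B ^ 2) / 4) (hs : 0 ≤ s) :
    (C ^ 2 - B ^ 2) / 4 * s ^ (n + 2) ≤
      (n + 2) * ((n + 1) * s ^ n * y ^ 2 - ω ^ 2 * s ^ (n + 2))
        - 2 * B * |(n + 2) * s ^ (n + 1) * y| + C ^ 2 * s ^ (n + 2) := by
  set E := C ^ 2 - (n + 2) * ω ^ 2 - (C ^ 2 - B ^ 2) / 4
  have hdiscr : (2 * B * (n + 2)) ^ 2 ≤ 4 * ((n + 2) * (n + 1)) * E := by
    have hδ : 0 ≤ C ^ 2 - B ^ 2 := by nlinarith [sq_nonneg ω]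
    have hE : B ^ 2 + (C ^ 2 - B ^ 2) / 2 ≤ E := by simp only [E]; linarith
    have : B ^ 2 * (n + 2) ≤ (n + 1) * E := by
      nlinarith [mul_le_mul_of_nonneg_left hE (by positivity : (0 : ℝ) ≤ n + 1)]
    nlinarith
  have hquad := quadratic_form_nonneg_of_sq_le (by positivity) hdiscr |y| s
  have habs : |(n + 2) * s ^ (n + 1) * y| = (n + 2) * s ^ (n + 1) * |y| := by
    rw [abs_mul, abs_of_nonneg (by positivity)]
  rw [habs, ← sq_abs y]
  linear_combination mul_nonneg (pow_nonneg hs n) hquad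

/-- **Damped harmonic oscillator lemma** (underlying Proposition 1.10): given constants
`0 ≤ B < C`, there is a threshold `T > 0` such that on every interval `[0, L]` with
`L > T` there exist a `C²` function `η`, positive inside and vanishing at the endpoints,
and `ε > 0` with `η″ − 2B|η′| + C²η ≥ ε·η` on `(0, L)`. -/
theorem damped_oscillator_gncc
    {B C : ℝ} (hB : 0 ≤ B) (hBC : B < C) :
    ∃ T : ℝ, 0 < T ∧ ∀ L : ℝ, T < L →
      ∃ (η : ℝ → ℝ) (ε : ℝ), 0 < ε ∧
        ContDiffOn ℝ 2 η (Icc 0 L) ∧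
        (∀ t ∈ Ioo 0 L, 0 < η t) ∧ η 0 = 0 ∧ η L = 0 ∧
        (∀ t ∈ Ioo 0 L,
          ε * η t ≤ deriv (deriv η) t - 2 * B * |deriv η t| + C ^ 2 * η t) := by
  set δ := C ^ 2 - B ^ 2
  have hδ : 0 < δ := by nlinarith
  obtain ⟨n, hn⟩ := exists_nat_ge (2 * B ^ 2 / δ)
  refine ⟨π * √(4 * (n + 2) / δ), by positivity, fun L hL => ?_⟩
  have hL0 : 0 < L := (by positivity : 0 < π * √(4 * (n + 2) / δ)).trans hL
  have hω : (n + 2) * (π / L) ^ 2 ≤ δ / 4 := by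
    have := mul_div_sq_lt_one_of_mul_sqrt_lt pi_pos hL
    rw [div_mul_eq_mul_div, div_lt_one hδ] at this
    linarith
  have hsin_pos : ∀ t ∈ Ioo 0 L, 0 < sin (π / L * t) := fun t ht =>
    sin_pos_of_pos_of_lt_pi (by have := ht.1; positivity)
      (by rw [div_mul_eq_mul_div, div_lt_iff₀ hL0]; nlinarith [pi_pos, ht.2])
  refine ⟨fun t => sin (π / L * t) ^ (n + 2), δ / 4, by positivity, by fun_prop,
    fun t ht => pow_pos (hsin_pos t ht) _, by simp, by simp [div_mul_cancel₀ π hL0.ne'],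
    fun t ht => ?_⟩
  rw [deriv_deriv_sin_mul_pow, deriv_sin_mul_pow_add_two]
  exact sin_pow_damped_bound ((div_le_iff₀ hδ).1 hn) hω (hsin_pos t ht).le
end
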